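/- Consider N stationary agents at fixed positions p_1,…,p_N ∈ ℝ³, where agent i's local frame orientation is a fixed special orthogonal matrix C_i ∈ SO(3), and agent i measures the local relative displacements p_{ji}^i = C_i (p_j − p_i) of its neighbors. Let G be a weighted directed graph on {1,…,N} with positive weights l_{ij} > 0 on its edges, suppose G has a rooted-out branch, and let k_u > 0. Suppose Ĉ_i : [0,∞) → ℝ^{3×3} are orientation estimates for which there exists a matrix C* ∈ ℝ^{3×3} and constants k_w, λ_w > 0 such that ‖Ĉ_i(t)^T C_i − C*‖ ≤ k_w e^{−λ_w t} for all i and all t ≥ 0. If the position estimates p̂_1,…,p̂_N : [0,∞) → ℝ³ are differentiable and evolve according to the estimation law p̂̇_i(t) = k_u Σ_{j : l_{ij} > 0} l_{ij} ( p̂_j(t) − p̂_i(t) − Ĉ_i(t)^T p_{ji}^i ), then there exist points p̂_1^∞,…,p̂_N^∞ ∈ ℝ³ and constants c > 0, λ > 0 such that ‖p̂_i(t) − p̂_i^∞‖ ≤ c e^{−λ t} for all i and t ≥ 0, and p̂_j^∞ − p̂_i^∞ = C*(p_j − p_i) for all i, j; in particular ‖p̂_j^∞ − p̂_i^∞‖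 = ‖p_j − p_i‖ whenever C* is orthogonal. -/

import Mathlib

/-!
Writing `zᵢ = p̂ᵢ - C* pᵢ`, each coordinate of `z` obeys `z' = -L z + d`, where `L` is the
Laplacian of the weights `ku lᵢⱼ` and the forcing `d`, built from the orientation errors
`Ĉᵢᵀ Cᵢ - C*`, decays like `e^{-λ_w t}`. The flow `e^{-tL}` is row-stochastic, and because
every agent is reachable from the root `r`, the column `r` of `e^{-L}` is positive. Sampling at
integer times, the spread `max z - min z` therefore contracts by a fixed factor per unit time up
to an exponentially small error, and `z(n)` converges geometrically to a constant vector `α`;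
Duhamel's estimate on each unit interval carries this over to all `t ≥ 0`. Then
`p̂ᵢ^∞ = C* pᵢ + α`.
-/

open Matrix Filter

/-- `G` has a rooted-out branch: some vertex has a directed path to every other vertex
(information flows from `j` to `i` along an edge when `l i j > 0`). -/
def hasRootedOutBranch {N : ℕ} (l : Fin N → Fin N → ℝ) : Prop :=
  ∃ r : Fin N, ∀ v : Fin N, Relation.ReflTransGen (fun u v => 0 < l v u) r v

/-- The Euclidean norm on `ℝ^m`. -/
noncomputable def euclEnorm {m : Type*} [Fintype m] (v : m → ℝ) : ℝ :=
  Real.sqrt (∑ i, v i ^ 2)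

/-- The (Frobenius) norm of a real matrix. -/
noncomputable def mnorm {m n : Type*} [Fintype m] [Fintype n]
    (A : Matrix m n ℝ) : ℝ :=
  Real.sqrt (∑ i, ∑ j, A i j ^ 2)

section Spread

variable {ι : Type*} [Fintype ι]

noncomputable def spread (x : ι → ℝ) : ℝ := (⨆ i, x i) - ⨅ i, x i

lemma le_ciSup_of_finite (x : ι → ℝ) (i : ι) : x i ≤ ⨆ j, x j :=
  le_ciSup (Set.finite_range x).bddAbove i

lemma ciInf_le_of_finite (x : ι → ℝ) (i : ι) : ⨅ j, x j ≤ x i :=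
  ciInf_le (Set.finite_range x).bddBelow i

lemma sub_le_spread (x : ι → ℝ) (i j : ι) : x i - x j ≤ spread x :=
  sub_le_sub (le_ciSup_of_finite x i) (ciInf_le_of_finite x j)

lemma norm_sub_const_le_spread (x : ι → ℝ) (r : ι) : ‖x - fun _ => x r‖ ≤ spread x :=
  (pi_norm_le_iff_of_nonneg ((sub_self (x r)).symm.le.trans (sub_le_spread x r r))).2
    fun i => abs_sub_le_iff.2 ⟨sub_le_spread x i r, sub_le_spread x r i⟩

lemma spread_le_spread_add [Nonempty ι] (x y : ι → ℝ) : spread y ≤ spread x + 2 * ‖y - x‖ := by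
  have hle : ∀ i, |y i - x i| ≤ ‖y - x‖ := fun i => norm_le_pi_norm (y - x) i
  have hsup : (⨆ i, y i) ≤ (⨆ i, x i) + ‖y - x‖ := ciSup_le fun i => by
    linarith [le_ciSup_of_finite x i, (abs_le.1 (hle i)).2]
  have hinf : (⨅ i, x i) - ‖y - x‖ ≤ ⨅ i, y i := le_ciInf fun i => by
    linarith [ciInf_le_of_finite x i, (abs_le.1 (hle i)).1]
  unfold spread
  linarith

end Spread

lemma exists_le_geometric_of_le_mul_add {a : ℕ → ℝ} {q b ρ : ℝ} (hq0 : 0 ≤ q) (hq1 : q < 1)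
    (hb : 0 ≤ b) (hρ0 : 0 ≤ ρ) (hρ1 : ρ < 1) (ha : ∀ n, a (n + 1) ≤ q * a n + b * ρ ^ n) :
    ∃ C σ, ρ ≤ σ ∧ 0 < σ ∧ σ < 1 ∧ ∀ n, a n ≤ C * σ ^ n := by
  set σ₀ := max q ρ
  have hσ₀ : σ₀ < 1 := max_lt hq1 hρ1
  have hqσ₀ : q ≤ σ₀ := le_max_left q ρ
  have hρσ₀ : ρ ≤ σ₀ := le_max_right q ρ
  set σ := (1 + σ₀) / 2 with hσ
  have hgap : 0 < σ - σ₀ := by linarith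
  set C := max (a 0) (b / (σ - σ₀))
  have hbC : b ≤ (σ - σ₀) * C := by
    rw [mul_comm, ← div_le_iff₀ hgap]
    exact le_max_right _ _
  have hC : 0 ≤ C := (div_nonneg hb hgap.le).trans (le_max_right _ _)
  refine ⟨C, σ, by linarith, by linarith, by linarith, fun n => ?_⟩
  induction n with
  | zero => simp [C]
  | succ n ih =>
    have hσn : 0 ≤ σ ^ n := pow_nonneg (by linarith) n
    have hρn : ρ ^ n ≤ σ ^ n := pow_le_pow_left₀ hρ0 (by linarith) n
    calc a (n + 1) ≤ q * a n + b * ρ ^ n := ha n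
      _ ≤ σ₀ * (C * σ ^ n) + b * σ ^ n :=
          add_le_add ((mul_le_mul_of_nonneg_left ih hq0).trans
            (mul_le_mul_of_nonneg_right hqσ₀ (mul_nonneg hC hσn)))
            (mul_le_mul_of_nonneg_left hρn hb)
      _ ≤ C * σ ^ (n + 1) := by rw [pow_succ]; nlinarith

lemma Real.exp_neg_pow_floor_le {lam : ℝ} (hlam : 0 ≤ lam) (t : ℝ) :
    Real.exp (-lam) ^ ⌊t⌋₊ ≤ Real.exp lam * Real.exp (-lam * t) := by
  rw [← Real.exp_nat_mul, ← Real.exp_add, Real.exp_le_exp]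
  nlinarith [Nat.lt_floor_add_one t]

namespace Matrix

variable {ι : Type*} [Fintype ι] [DecidableEq ι]

section RowStochastic

variable {P : Matrix ι ι ℝ}

lemma mulVec_apply_le_of_mem_rowStochastic (hP : P ∈ rowStochastic ℝ ι) {r : ι} {δ : ℝ}
    (hδ : ∀ i, δ ≤ P i r) {x : ι → ℝ} {b : ℝ} (hx : ∀ j, x j ≤ b) (i : ι) :
    (P *ᵥ x) i ≤ δ * x r + (1 - δ) * b := by
  have hsum : b - (P *ᵥ x) i = ∑ j, P i j * (b - x j) := by
    simp only [mul_sub, Finset.sum_sub_distrib, ← Finset.sum_mul,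
      sum_row_of_mem_rowStochastic hP i, one_mul, mulVec, dotProduct]
  have hsingle : P i r * (b - x r) ≤ ∑ j, P i j * (b - x j) :=
    Finset.single_le_sum (f := fun j => P i j * (b - x j))
      (fun j _ => mul_nonneg (nonneg_of_mem_rowStochastic hP) (sub_nonneg.2 (hx j)))
      (Finset.mem_univ r)
  nlinarith [mul_le_mul_of_nonneg_right (hδ i) (sub_nonneg.2 (hx r))]

lemma le_mulVec_apply_of_mem_rowStochastic (hP : P ∈ rowStochastic ℝ ι) {r : ι} {δ : ℝ}
    (hδ : ∀ i, δ ≤ P i r) {x : ι → ℝ} {b : ℝ} (hx : ∀ j, b ≤ x j) (i : ι) :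
    δ * x r + (1 - δ) * b ≤ (P *ᵥ x) i := by
  have h := mulVec_apply_le_of_mem_rowStochastic hP hδ (x := -x) (b := -b)
    (fun j => neg_le_neg (hx j)) i
  simp only [mulVec_neg, Pi.neg_apply] at h
  linarith

lemma mem_Icc_mulVec_apply_of_mem_rowStochastic (hP : P ∈ rowStochastic ℝ ι) (x : ι → ℝ)
    (i : ι) : (P *ᵥ x) i ∈ Set.Icc (⨅ j, x j) (⨆ j, x j) := by
  have hδ : ∀ i', (0 : ℝ) ≤ P i' i := fun _ => nonneg_of_mem_rowStochastic hP
  constructor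
  · simpa using le_mulVec_apply_of_mem_rowStochastic hP hδ (ciInf_le_of_finite x) i
  · simpa using mulVec_apply_le_of_mem_rowStochastic hP hδ (le_ciSup_of_finite x) i

lemma norm_mulVec_le_of_mem_rowStochastic (hP : P ∈ rowStochastic ℝ ι) (x : ι → ℝ) :
    ‖P *ᵥ x‖ ≤ ‖x‖ := by
  refine (pi_norm_le_iff_of_nonneg (norm_nonneg x)).2 fun i => abs_le.2 ?_
  have : Nonempty ι := ⟨i⟩
  constructor
  · exact ((mem_Icc_mulVec_apply_of_mem_rowStochastic hP x i).1.trans' <|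
      le_ciInf fun j => neg_le_of_abs_le (norm_le_pi_norm x j))
  · exact (mem_Icc_mulVec_apply_of_mem_rowStochastic hP x i).2.trans <|
      ciSup_le fun j => le_of_abs_le (norm_le_pi_norm x j)

lemma abs_mulVec_apply_sub_le_spread (hP : P ∈ rowStochastic ℝ ι) (x : ι → ℝ) (i j : ι) :
    |(P *ᵥ x) i - x j| ≤ spread x := by
  have h := mem_Icc_mulVec_apply_of_mem_rowStochastic hP x i
  have hsup := le_ciSup_of_finite x j
  have hinf := ciInf_le_of_finite x j
  unfold spread
  exact abs_sub_le_iff.2 ⟨by linarith [h.2], by linarith [h.1]⟩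

lemma spread_mulVec_le_of_mem_rowStochastic (hP : P ∈ rowStochastic ℝ ι) {r : ι} {δ : ℝ}
    (hδ : ∀ i, δ ≤ P i r) (x : ι → ℝ) : spread (P *ᵥ x) ≤ (1 - δ) * spread x := by
  have : Nonempty ι := ⟨r⟩
  have hsup : (⨆ i, (P *ᵥ x) i) ≤ δ * x r + (1 - δ) * ⨆ j, x j :=
    ciSup_le (mulVec_apply_le_of_mem_rowStochastic hP hδ (le_ciSup_of_finite x))
  have hinf : δ * x r + (1 - δ) * (⨅ j, x j) ≤ ⨅ i, (P *ᵥ x) i :=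
    le_ciInf (le_mulVec_apply_of_mem_rowStochastic hP hδ (ciInf_le_of_finite x))
  unfold spread
  linarith

theorem exists_norm_sub_const_le_geometric (hP : P ∈ rowStochastic ℝ ι) {r : ι} {δ : ℝ}
    (hδ0 : 0 < δ) (hδ : ∀ i, δ ≤ P i r) {x : ℕ → ι → ℝ} {K ρ : ℝ} (hρ0 : 0 ≤ ρ) (hρ1 : ρ < 1)
    (hx : ∀ n, ‖x (n + 1) - P *ᵥ x n‖ ≤ K * ρ ^ n) :
    ∃ α C σ, ρ ≤ σ ∧ 0 < σ ∧ σ < 1 ∧ ∀ n, ‖x n - fun _ => α‖ ≤ C * σ ^ n := by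
  have : Nonempty ι := ⟨r⟩
  have hK : 0 ≤ K := by simpa using (norm_nonneg _).trans (hx 0)
  have hδ1 : δ ≤ 1 := (hδ r).trans (le_one_of_mem_rowStochastic hP)
  have hspread : ∀ n, spread (x (n + 1)) ≤ (1 - δ) * spread (x n) + 2 * K * ρ ^ n := fun n => by
    linarith [spread_le_spread_add (P *ᵥ x n) (x (n + 1)),
      spread_mulVec_le_of_mem_rowStochastic hP hδ (x n), hx n]
  obtain ⟨C, σ, hρσ, hσ0, hσ1, hC⟩ := exists_le_geometric_of_le_mul_add
    (a := fun n => spread (x n)) (b := 2 * K) (by linarith) (by linarith) (by linarith)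
    hρ0 hρ1 hspread
  have hstep : ∀ n, dist (x n r) (x (n + 1) r) ≤ (K + C) * σ ^ n := fun n => by
    have herr : |x (n + 1) r - (P *ᵥ x n) r| ≤ K * ρ ^ n := (norm_le_pi_norm _ r).trans (hx n)
    have hmove := abs_mulVec_apply_sub_le_spread hP (x n) r r
    have hρσn : K * ρ ^ n ≤ K * σ ^ n := by gcongr
    rw [Real.dist_eq, abs_sub_comm, add_mul]
    calc |x (n + 1) r - x n r|
        ≤ |x (n + 1) r - (P *ᵥ x n) r| + |(P *ᵥ x n) r - x n r| := abs_sub_le _ _ _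
      _ ≤ K * σ ^ n + C * σ ^ n := by linarith [hC n]
  obtain ⟨α, hα⟩ := cauchySeq_tendsto_of_complete (cauchySeq_of_le_geometric σ _ hσ1 hstep)
  refine ⟨α, C + (K + C) / (1 - σ), σ, hρσ, hσ0, hσ1, fun n => ?_⟩
  have hlim := dist_le_of_le_geometric_of_tendsto σ _ hσ1 hstep hα n
  have hconst : ‖(fun _ => x n r) - fun _ : ι => α‖ ≤ (K + C) * σ ^ n / (1 - σ) :=
    (pi_norm_le_iff_of_nonneg (dist_nonneg.trans hlim)).2 fun _ => hlim
  calc ‖x n - fun _ => α‖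
      ≤ ‖x n - fun _ => x n r‖ + ‖(fun _ => x n r) - fun _ : ι => α‖ :=
        norm_sub_le_norm_sub_add_norm_sub _ _ _
    _ ≤ C * σ ^ n + (K + C) * σ ^ n / (1 - σ) :=
        add_le_add ((norm_sub_const_le_spread _ r).trans (hC n)) hconst
    _ = (C + (K + C) / (1 - σ)) * σ ^ n := by ring

end RowStochastic

section Exponential

open NormedSpace

attribute [local instance] Matrix.linftyOpNormedRing Matrix.linftyOpNormedAlgebra

theorem _root_.HasDerivAt.matrix_mulVec {M : ℝ → Matrix ι ι ℝ} {v : ℝ → ι → ℝ} {M' : Matrix ι ι ℝ}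
    {v' : ι → ℝ} {t : ℝ} (hM : HasDerivAt M M' t) (hv : HasDerivAt v v' t) :
    HasDerivAt (fun t => M t *ᵥ v t) (M t *ᵥ v' + M' *ᵥ v t) t :=
  ContinuousLinearMap.hasDerivAt_of_bilinear
    (B := (Matrix.mulVecBilin ℝ ℝ : Matrix ι ι ℝ →ₗ[ℝ] _ →ₗ[ℝ] _).toContinuousBilinearMap)
    (fun _ => hM) (fun _ => hv)

lemma hasSum_exp_apply (B : Matrix ι ι ℝ) (i j : ι) :
    HasSum (fun n : ℕ => (n.factorial : ℝ)⁻¹ * (B ^ n) i j) (exp B i j) :=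
  Pi.hasSum.1 (Pi.hasSum.1 (exp_series_hasSum_exp' (𝕂 := ℝ) B) i) j

lemma exp_eq_exp_neg_smul_exp_add_smul_one (A : Matrix ι ι ℝ) (μ : ℝ) :
    exp A = Real.exp (-μ) • exp (A + μ • 1) := by
  have hscalar : ∀ c : ℝ, exp (c • (1 : Matrix ι ι ℝ)) = Real.exp c • 1 := fun c => by
    have h := algebraMap_exp_comm (𝕂 := ℝ) (𝔸 := Matrix ι ι ℝ) c
    rw [Algebra.algebraMap_eq_smul_one, Algebra.algebraMap_eq_smul_one, ← Real.exp_eq_exp_ℝ] at h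
    exact h.symm
  rw [exp_add_of_commute _ _ ((Commute.one_right A).smul_right μ), hscalar, mul_smul_one,
    smul_smul, ← Real.exp_add, neg_add_cancel, Real.exp_zero, one_smul]

lemma exists_nonneg_add_smul_one {A : Matrix ι ι ℝ} (hA : ∀ i j, i ≠ j → 0 ≤ A i j) :
    ∃ μ : ℝ, 0 ≤ μ ∧ ∀ i j, 0 ≤ (A + μ • 1) i j := by
  refine ⟨∑ k, |A k k|, Finset.sum_nonneg fun _ _ => abs_nonneg _, fun i j => ?_⟩
  by_cases h : i = j
  · subst h
    have := Finset.single_le_sum (f := fun k => |A k k|) (fun _ _ => abs_nonneg _)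
      (Finset.mem_univ i)
    simp only [add_apply, smul_apply, one_apply_eq, smul_eq_mul, mul_one]
    linarith [neg_abs_le (A i i)]
  · simpa [one_apply_ne h] using hA i j h

lemma exp_apply_nonneg {A : Matrix ι ι ℝ} (hA : ∀ i j, i ≠ j → 0 ≤ A i j) (i j : ι) :
    0 ≤ exp A i j := by
  obtain ⟨μ, -, hμ⟩ := exists_nonneg_add_smul_one hA
  rw [exp_eq_exp_neg_smul_exp_add_smul_one A μ, smul_apply, smul_eq_mul]
  exact mul_nonneg (Real.exp_pos _).le ((hasSum_exp_apply _ i j).nonneg fun n =>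
    mul_nonneg (by positivity) (pow_apply_nonneg hμ n i j))

lemma exp_apply_pos_of_reflTransGen {A : Matrix ι ι ℝ} (hA : ∀ i j, i ≠ j → 0 ≤ A i j)
    {r v : ι} (hrv : Relation.ReflTransGen (fun u w => 0 < A w u) r v) : 0 < exp A v r := by
  obtain ⟨μ, hμ0, hμ⟩ := exists_nonneg_add_smul_one hA
  set B := A + μ • 1
  have hAB : ∀ i j, A i j ≤ B i j := fun i j => by
    by_cases h : i = j <;> simp [B, h, hμ0]
  have hpow : ∃ m : ℕ, 0 < (B ^ m) v r := by
    induction hrv with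
    | refl => exact ⟨0, by simp⟩
    | @tail u w _ huw ih =>
      obtain ⟨m, hm⟩ := ih
      refine ⟨m + 1, ?_⟩
      rw [pow_succ', mul_apply]
      exact Finset.sum_pos' (fun k _ => mul_nonneg (hμ w k) (pow_apply_nonneg hμ m k r))
        ⟨u, Finset.mem_univ u, mul_pos (huw.trans_le (hAB w u)) hm⟩
  obtain ⟨m, hm⟩ := hpow
  have hterm : (m.factorial : ℝ)⁻¹ * (B ^ m) v r ≤ exp B v r :=
    le_hasSum (hasSum_exp_apply B v r) m fun n _ =>
      mul_nonneg (by positivity) (pow_apply_nonneg hμ n v r)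
  rw [exp_eq_exp_neg_smul_exp_add_smul_one A μ, smul_apply, smul_eq_mul]
  exact mul_pos (Real.exp_pos _) (hterm.trans_lt' (by positivity))

lemma exp_smul_mulVec_eq_self {A : Matrix ι ι ℝ} {v : ι → ℝ} (hAv : A *ᵥ v = 0) (u : ℝ) :
    exp (u • A) *ᵥ v = v := by
  have hderiv : ∀ s : ℝ, HasDerivAt (fun s : ℝ => exp (s • A) *ᵥ v) 0 s := fun s => by
    have h := (hasDerivAt_exp_smul_const (𝕂 := ℝ) A s).matrix_mulVec (hasDerivAt_const s v)
    rwa [mulVec_zero, zero_add, ← mulVec_mulVec, hAv, mulVec_zero] at h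
  simpa using is_const_of_deriv_eq_zero (fun s => (hderiv s).differentiableAt)
    (fun s => (hderiv s).deriv) u 0

lemma exp_mem_rowStochastic {A : Matrix ι ι ℝ} (hA : ∀ i j, i ≠ j → 0 ≤ A i j)
    (hA1 : A *ᵥ 1 = 0) : exp A ∈ rowStochastic ℝ ι :=
  ⟨exp_apply_nonneg hA, by simpa using exp_smul_mulVec_eq_self hA1 1⟩

lemma exp_smul_mem_rowStochastic {A : Matrix ι ι ℝ} (hA : ∀ i j, i ≠ j → 0 ≤ A i j)
    (hA1 : A *ᵥ 1 = 0) {u : ℝ} (hu : 0 ≤ u) : exp (u • A) ∈ rowStochastic ℝ ι :=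
  exp_mem_rowStochastic (fun i j h => mul_nonneg hu (hA i j h))
    (by rw [smul_mulVec, hA1, smul_zero])

/-- Duhamel's formula, as an estimate: `e^{(t-τ)A} z(τ)` has derivative `e^{(t-τ)A} d(τ)`. -/
theorem norm_sub_exp_smul_mulVec_le {A : Matrix ι ι ℝ} {z d : ℝ → ι → ℝ} {s t C : ℝ}
    (hst : s ≤ t) (hz : ∀ τ ∈ Set.Icc s t, HasDerivAt z (A *ᵥ z τ + d τ) τ)
    (hC : ∀ τ ∈ Set.Ico s t, ‖exp ((t - τ) • A) *ᵥ d τ‖ ≤ C) :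
    ‖z t - exp ((t - s) • A) *ᵥ z s‖ ≤ C * (t - s) := by
  have hexp : ∀ τ : ℝ, HasDerivAt (fun τ => exp ((t - τ) • A)) (-(exp ((t - τ) • A) * A)) τ :=
    fun τ => by
      have h := (hasDerivAt_exp_smul_const (𝕂 := ℝ) A (t - τ)).scomp τ
        ((hasDerivAt_id τ).const_sub t)
      rwa [neg_one_smul] at h
  have hg : ∀ τ ∈ Set.Icc s t, HasDerivWithinAt (fun τ => exp ((t - τ) • A) *ᵥ z τ)
      (exp ((t - τ) • A) *ᵥ d τ) (Set.Icc s t) τ := fun τ hτ => by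
    have h := ((hexp τ).matrix_mulVec (hz τ hτ)).hasDerivWithinAt (s := Set.Icc s t)
    rwa [mulVec_add, neg_mulVec, ← mulVec_mulVec, add_neg_cancel_comm] at h
  simpa using norm_image_sub_le_of_norm_deriv_le_segment' hg hC t ⟨hst, le_rfl⟩

variable {A : Matrix ι ι ℝ}

lemma norm_sub_exp_smul_mulVec_le_of_offDiag_nonneg (hA : ∀ i j, i ≠ j → 0 ≤ A i j)
    (hA1 : A *ᵥ 1 = 0) {z d : ℝ → ι → ℝ} {K μ : ℝ} (hμ : 0 ≤ μ)
    (hd : ∀ t, 0 ≤ t → ‖d t‖ ≤ K * Real.exp (-μ * t))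
    (hz : ∀ t, 0 ≤ t → HasDerivAt z (A *ᵥ z t + d t) t) {s u : ℝ} (hs : 0 ≤ s) (hu0 : 0 ≤ u)
    (hu1 : u ≤ 1) : ‖z (s + u) - exp (u • A) *ᵥ z s‖ ≤ K * Real.exp (-μ * s) := by
  have hK : 0 ≤ K := by simpa using (norm_nonneg _).trans (hd 0 le_rfl)
  have hforcing : ∀ τ ∈ Set.Ico s (s + u),
      ‖exp ((s + u - τ) • A) *ᵥ d τ‖ ≤ K * Real.exp (-μ * s) := fun τ hτ => calc
    ‖exp ((s + u - τ) • A) *ᵥ d τ‖ ≤ ‖d τ‖ :=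
      norm_mulVec_le_of_mem_rowStochastic
        (exp_smul_mem_rowStochastic hA hA1 (by linarith [hτ.2])) _
    _ ≤ K * Real.exp (-μ * τ) := hd τ (hs.trans hτ.1)
    _ ≤ K * Real.exp (-μ * s) :=
      mul_le_mul_of_nonneg_left (Real.exp_le_exp.2 (by nlinarith [hτ.1])) hK
  have h := norm_sub_exp_smul_mulVec_le (by linarith) (fun τ hτ => hz τ (hs.trans hτ.1)) hforcing
  rw [add_sub_cancel_left] at h
  exact h.trans (mul_le_of_le_one_right (by positivity) hu1)

theorem exists_norm_sub_const_le_exp_of_hasDerivAt (hA : ∀ i j, i ≠ j → 0 ≤ A i j)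
    (hA1 : A *ᵥ 1 = 0) {r : ι} (hr : ∀ v, Relation.ReflTransGen (fun u w => 0 < A w u) r v)
    {z d : ℝ → ι → ℝ} {K μ : ℝ} (hμ : 0 < μ) (hd : ∀ t, 0 ≤ t → ‖d t‖ ≤ K * Real.exp (-μ * t))
    (hz : ∀ t, 0 ≤ t → HasDerivAt z (A *ᵥ z t + d t) t) :
    ∃ α : ℝ, ∃ c > 0, ∃ lam > 0, ∀ t, 0 ≤ t → ‖z t - fun _ => α‖ ≤ c * Real.exp (-lam * t) := by
  have : Nonempty ι := ⟨r⟩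
  have hK : 0 ≤ K := by simpa using (norm_nonneg _).trans (hd 0 le_rfl)
  have hwindow : ∀ (n : ℕ) {u : ℝ}, 0 ≤ u → u ≤ 1 →
      ‖z (n + u) - exp (u • A) *ᵥ z n‖ ≤ K * Real.exp (-μ) ^ n := fun n u hu0 hu1 => by
    rw [← Real.exp_nat_mul, mul_comm (n : ℝ)]
    exact norm_sub_exp_smul_mulVec_le_of_offDiag_nonneg hA hA1 hμ.le hd hz n.cast_nonneg hu0 hu1
  obtain ⟨v, hv⟩ := Finite.exists_min fun v => exp A v r
  obtain ⟨α, C, σ, hρσ, hσ0, hσ1, hC⟩ := exists_norm_sub_const_le_geometric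
    (exp_mem_rowStochastic hA hA1) (exp_apply_pos_of_reflTransGen hA (hr v)) hv
    (x := fun n => z n) (Real.exp_pos _).le (Real.exp_lt_one_iff.2 (neg_lt_zero.2 hμ))
    fun n => by simpa using hwindow n zero_le_one le_rfl
  have hC0 : 0 ≤ C := by simpa using (norm_nonneg _).trans (hC 0)
  set lam := -Real.log σ
  have hlam : 0 < lam := neg_pos.2 (Real.log_neg hσ0 hσ1)
  have hσ : Real.exp (-lam) = σ := by rw [neg_neg, Real.exp_log hσ0]
  refine ⟨α, (K + C + 1) * Real.exp lam, by positivity, lam, hlam, fun t ht => ?_⟩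
  set n := ⌊t⌋₊
  have hu0 : 0 ≤ t - n := sub_nonneg.2 (Nat.floor_le ht)
  have hconst : exp ((t - n) • A) *ᵥ (fun _ => α) = fun _ => α := by
    refine exp_smul_mulVec_eq_self ?_ _
    rw [show (fun _ : ι => α) = α • (1 : ι → ℝ) by ext; simp, mulVec_smul, hA1, smul_zero]
  have hsplit : z t - (fun _ => α) = (z t - exp ((t - n) • A) *ᵥ z n)
      + exp ((t - n) • A) *ᵥ (z n - fun _ => α) := by
    rw [mulVec_sub, hconst, sub_add_sub_cancel]
  have hwindow' := hwindow n hu0 (by linarith [Nat.lt_floor_add_one t])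
  rw [add_sub_cancel] at hwindow'
  calc ‖z t - fun _ => α‖ ≤ K * σ ^ n + C * σ ^ n := by
        rw [hsplit]
        refine (norm_add_le _ _).trans (add_le_add (hwindow'.trans (by gcongr)) ?_)
        exact (norm_mulVec_le_of_mem_rowStochastic
          (exp_smul_mem_rowStochastic hA hA1 hu0) _).trans (hC n)
    _ ≤ (K + C + 1) * σ ^ n := by nlinarith [pow_nonneg hσ0.le n]
    _ ≤ (K + C + 1) * (Real.exp lam * Real.exp (-lam * t)) := by
        rw [← hσ]
        gcongr
        exact Real.exp_neg_pow_floor_le hlam.le t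
    _ = (K + C + 1) * Real.exp lam * Real.exp (-lam * t) := by ring

end Exponential

def weightedLaplacian (w : Matrix ι ι ℝ) : Matrix ι ι ℝ := diagonal (fun i => ∑ j, w i j) - w

lemma neg_weightedLaplacian_mulVec_apply (w : Matrix ι ι ℝ) (x : ι → ℝ) (i : ι) :
    (-weightedLaplacian w *ᵥ x) i = ∑ j, w i j * (x j - x i) := by
  rw [weightedLaplacian, neg_sub, sub_mulVec, Pi.sub_apply, mulVec_diagonal]
  simp [mulVec, dotProduct, mul_sub, Finset.sum_mul]

lemma neg_weightedLaplacian_apply_of_ne (w : Matrix ι ι ℝ) {i j : ι} (h : i ≠ j) :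
    (-weightedLaplacian w) i j = w i j := by
  simp [weightedLaplacian, diagonal_apply_ne _ h]

lemma neg_weightedLaplacian_mulVec_one (w : Matrix ι ι ℝ) : -weightedLaplacian w *ᵥ 1 = 0 := by
  ext i
  simp [neg_weightedLaplacian_mulVec_apply]

lemma reflTransGen_neg_weightedLaplacian {w : Matrix ι ι ℝ} {r v : ι}
    (h : Relation.ReflTransGen (fun u v => 0 < w v u) r v) :
    Relation.ReflTransGen (fun u v => 0 < (-weightedLaplacian w) v u) r v := by
  refine Relation.ReflTransGen.lift' id (fun u v huv => ?_) _ _ h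
  by_cases huv' : v = u
  · subst huv'
    exact Relation.ReflTransGen.refl
  · exact .single ((neg_weightedLaplacian_apply_of_ne w huv').symm ▸ huv)

end Matrix

lemma abs_apply_le_mnorm {m n : Type*} [Fintype m] [Fintype n] (A : Matrix m n ℝ) (i : m)
    (j : n) : |A i j| ≤ mnorm A := by
  rw [← Real.sqrt_sq_eq_abs]
  refine Real.sqrt_le_sqrt ((Finset.single_le_sum (f := fun j => A i j ^ 2)
    (fun _ _ => sq_nonneg _) (Finset.mem_univ j)).trans ?_)
  exact Finset.single_le_sum (f := fun i => ∑ j, A i j ^ 2)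
    (fun _ _ => Finset.sum_nonneg fun _ _ => sq_nonneg _) (Finset.mem_univ i)

lemma abs_mulVec_apply_le_mnorm_mul {m n : Type*} [Fintype m] [Fintype n] (A : Matrix m n ℝ)
    (v : n → ℝ) (i : m) : |(A *ᵥ v) i| ≤ mnorm A * ∑ j, |v j| := by
  rw [Finset.mul_sum]
  refine (Finset.abs_sum_le_sum_abs _ _).trans (Finset.sum_le_sum fun j _ => ?_)
  rw [abs_mul]
  exact mul_le_mul_of_nonneg_right (abs_apply_le_mnorm A i j) (abs_nonneg _)

lemma euclEnorm_eq_sqrt_dotProduct {m : Type*} [Fintype m] (v : m → ℝ) :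
    euclEnorm v = √(v ⬝ᵥ v) := by
  simp [euclEnorm, dotProduct, sq]

lemma euclEnorm_mulVec_of_transpose_mul_self {m n : Type*} [Fintype m] [Fintype n]
    [DecidableEq n] {A : Matrix m n ℝ} (hA : Aᵀ * A = 1) (v : n → ℝ) :
    euclEnorm (A *ᵥ v) = euclEnorm v := by
  rw [euclEnorm_eq_sqrt_dotProduct, euclEnorm_eq_sqrt_dotProduct, dotProduct_mulVec,
    ← mulVec_transpose, mulVec_mulVec, hA, one_mulVec]

lemma euclEnorm_le_sqrt_card_mul {m : Type*} [Fintype m] {v : m → ℝ} {b : ℝ} (hb : 0 ≤ b)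
    (hv : ∀ k, |v k| ≤ b) : euclEnorm v ≤ √(Fintype.card m) * b := by
  calc euclEnorm v ≤ √(∑ _k : m, b ^ 2) :=
        Real.sqrt_le_sqrt (Finset.sum_le_sum fun k _ => sq_le_sq' (abs_le.1 (hv k)).1
          (abs_le.1 (hv k)).2)
    _ = √(Fintype.card m) * b := by
        rw [Finset.sum_const, Finset.card_univ, nsmul_eq_mul, Real.sqrt_mul (Nat.cast_nonneg _),
          Real.sqrt_sq hb]

lemma exists_forall_mul_exp_le {κ : Type*} [Finite κ] [Nonempty κ] {c lam : κ → ℝ}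
    (hc : ∀ k, 0 < c k) (hlam : ∀ k, 0 < lam k) :
    ∃ C > 0, ∃ Λ > 0, ∀ k, ∀ t : ℝ, 0 ≤ t →
      c k * Real.exp (-lam k * t) ≤ C * Real.exp (-Λ * t) := by
  have := Fintype.ofFinite κ
  obtain ⟨k₀, hk₀⟩ := Finite.exists_min lam
  refine ⟨∑ k, c k, Finset.sum_pos (fun k _ => hc k) Finset.univ_nonempty, lam k₀, hlam k₀,
    fun k t ht => ?_⟩
  exact mul_le_mul (Finset.single_le_sum (fun k _ => (hc k).le) (Finset.mem_univ k))
    (Real.exp_le_exp.2 (by nlinarith [hk₀ k])) (Real.exp_pos _).le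
    (Finset.sum_nonneg fun k _ => (hc k).le)

section EstimationLaw

variable {ι κ : Type*} [Fintype ι] [Fintype κ] {p : ι → κ → ℝ} {l : Matrix ι ι ℝ} {ku : ℝ}

lemma norm_orientation_disturbance_le (hl : ∀ i j, 0 ≤ l i j) (hku : 0 ≤ ku)
    {E : ι → Matrix κ κ ℝ} {ε : ℝ} (hε : 0 ≤ ε) (hE : ∀ i, mnorm (E i) ≤ ε) (k : κ) :
    ‖fun i => ku * ∑ j, l i j * (E i *ᵥ (p j - p i)) k‖
      ≤ ku * (∑ i, ∑ j, l i j * ∑ m, |p j m - p i m|) * ε := by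
  have hrow_nonneg : ∀ i, 0 ≤ ∑ j, l i j * ∑ m, |p j m - p i m| := fun i =>
    Finset.sum_nonneg fun j _ => mul_nonneg (hl i j) (Finset.sum_nonneg fun _ _ => abs_nonneg _)
  refine (pi_norm_le_iff_of_nonneg (mul_nonneg (mul_nonneg hku
    (Finset.sum_nonneg fun i _ => hrow_nonneg i)) hε)).2 fun i => ?_
  have hrow : |∑ j, l i j * (E i *ᵥ (p j - p i)) k|
      ≤ (∑ j, l i j * ∑ m, |p j m - p i m|) * ε := by
    rw [Finset.sum_mul]
    refine (Finset.abs_sum_le_sum_abs _ _).trans (Finset.sum_le_sum fun j _ => ?_)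
    rw [abs_mul, abs_of_nonneg (hl i j), mul_assoc]
    refine mul_le_mul_of_nonneg_left ((abs_mulVec_apply_le_mnorm_mul _ _ k).trans ?_) (hl i j)
    rw [mul_comm]
    exact mul_le_mul_of_nonneg_left (hE i) (Finset.sum_nonneg fun _ _ => abs_nonneg _)
  have hrow_le : ∑ j, l i j * ∑ m, |p j m - p i m| ≤ ∑ i, ∑ j, l i j * ∑ m, |p j m - p i m| :=
    Finset.single_le_sum (f := fun i => ∑ j, l i j * ∑ m, |p j m - p i m|)
      (fun i _ => hrow_nonneg i) (Finset.mem_univ i)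
  rw [Real.norm_eq_abs, abs_mul, abs_of_nonneg hku, mul_assoc]
  exact mul_le_mul_of_nonneg_left (hrow.trans (mul_le_mul_of_nonneg_right hrow_le hε)) hku

lemma hasDerivAt_estimate_sub_mulVec [DecidableEq ι] {C : ι → Matrix κ κ ℝ}
    {Chat : ι → ℝ → Matrix κ κ ℝ} {Cstar : Matrix κ κ ℝ} {phat : ι → ℝ → κ → ℝ} {t : ℝ}
    (hl : ∀ i j, 0 ≤ l i j)
    (hode : ∀ i, HasDerivAt (phat i)
      (ku • ∑ j ∈ Finset.univ.filter (fun j => 0 < l i j),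
        l i j • (phat j t - phat i t - ((Chat i t)ᵀ).mulVec ((C i).mulVec (p j - p i)))) t)
    (k : κ) :
    HasDerivAt (fun t i => phat i t k - (Cstar *ᵥ p i) k)
      (-weightedLaplacian (ku • l) *ᵥ (fun i => phat i t k - (Cstar *ᵥ p i) k)
        - fun i => ku * ∑ j, l i j * (((Chat i t)ᵀ * C i - Cstar) *ᵥ (p j - p i)) k) t := by
  refine hasDerivAt_pi.2 fun i => ?_
  have h := (hasDerivAt_pi.1 (hode i) k).sub_const ((Cstar *ᵥ p i) k)
  convert h using 1
  rw [Finset.sum_filter_of_ne fun j _ hj => (hl i j).lt_of_ne' (left_ne_zero_of_smul hj),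
    Pi.sub_apply, neg_weightedLaplacian_mulVec_apply]
  simp only [Matrix.smul_apply, Pi.smul_apply, Finset.sum_apply, smul_eq_mul, sub_mulVec,
    mulVec_sub, ← mulVec_mulVec, Pi.sub_apply, Finset.mul_sum, ← Finset.sum_sub_distrib]
  exact Finset.sum_congr rfl fun j _ => by ring

lemma exists_abs_estimate_sub_le_exp [DecidableEq ι] {C : ι → Matrix κ κ ℝ}
    {Chat : ι → ℝ → Matrix κ κ ℝ} {Cstar : Matrix κ κ ℝ} {phat : ι → ℝ → κ → ℝ} {kw lw : ℝ}
    (hl : ∀ i j, 0 ≤ l i j) {r : ι} (hr : ∀ v, Relation.ReflTransGen (fun u v => 0 < l v u) r v)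
    (hku : 0 < ku) (hkw : 0 < kw) (hlw : 0 < lw)
    (hest : ∀ i, ∀ t : ℝ, 0 ≤ t → mnorm ((Chat i t)ᵀ * C i - Cstar) ≤ kw * Real.exp (-lw * t))
    (hode : ∀ i, ∀ t : ℝ, 0 ≤ t → HasDerivAt (phat i)
      (ku • ∑ j ∈ Finset.univ.filter (fun j => 0 < l i j),
        l i j • (phat j t - phat i t - ((Chat i t)ᵀ).mulVec ((C i).mulVec (p j - p i)))) t)
    (k : κ) :
    ∃ α : ℝ, ∃ c > 0, ∃ lam > 0, ∀ t : ℝ, 0 ≤ t → ∀ i,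
      |phat i t k - (Cstar *ᵥ p i) k - α| ≤ c * Real.exp (-lam * t) := by
  obtain ⟨α, c, hc, lam, hlam, hconv⟩ := exists_norm_sub_const_le_exp_of_hasDerivAt
    (A := -weightedLaplacian (ku • l)) (z := fun t i => phat i t k - (Cstar *ᵥ p i) k)
    (d := fun t => -fun i => ku * ∑ j, l i j * (((Chat i t)ᵀ * C i - Cstar) *ᵥ (p j - p i)) k)
    (K := ku * (∑ i, ∑ j, l i j * ∑ m, |p j m - p i m|) * kw)
    (fun i j h => by
      rw [neg_weightedLaplacian_apply_of_ne _ h]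
      exact mul_nonneg hku.le (hl i j))
    (neg_weightedLaplacian_mulVec_one _)
    (fun v => reflTransGen_neg_weightedLaplacian
      (Relation.ReflTransGen.mono (fun _ _ => mul_pos hku) _ _ (hr v)))
    hlw
    (fun t ht => by
      rw [norm_neg, mul_assoc _ kw]
      exact norm_orientation_disturbance_le hl hku.le (by positivity) (hest · t ht) k)
    (fun t ht => by
      simpa only [sub_eq_add_neg] using hasDerivAt_estimate_sub_mulVec hl (hode · t ht) k)
  exact ⟨α, c, hc, lam, hlam, fun t ht i => (norm_le_pi_norm _ i).trans (hconv t ht)⟩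

end EstimationLaw

theorem network_localization_convergence_general
    (N : ℕ)
    (p : Fin N → Fin 3 → ℝ)
    (C : Fin N → Matrix (Fin 3) (Fin 3) ℝ)
    (l : Fin N → Fin N → ℝ) (hl : ∀ i j, 0 ≤ l i j)
    (hroot : hasRootedOutBranch l)
    (ku : ℝ) (hku : 0 < ku)
    (Chat : Fin N → ℝ → Matrix (Fin 3) (Fin 3) ℝ)
    (Cstar : Matrix (Fin 3) (Fin 3) ℝ)
    (kw lw : ℝ) (hkw : 0 < kw) (hlw : 0 < lw)
    (hest : ∀ i, ∀ t : ℝ, 0 ≤ t →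
      mnorm ((Chat i t)ᵀ * C i - Cstar) ≤ kw * Real.exp (-lw * t))
    (phat : Fin N → ℝ → Fin 3 → ℝ)
    (hode : ∀ i, ∀ t : ℝ, 0 ≤ t →
      HasDerivAt (phat i)
        (ku • ∑ j ∈ Finset.univ.filter (fun j => 0 < l i j),
          l i j • (phat j t - phat i t
            - ((Chat i t)ᵀ).mulVec ((C i).mulVec (p j - p i)))) t) :
    ∃ phatinf : Fin N → Fin 3 → ℝ, ∃ c > (0 : ℝ), ∃ lam > (0 : ℝ),
      (∀ i, ∀ t : ℝ, 0 ≤ t → euclEnorm (phat i t - phatinf i) ≤ c * Real.exp (-lam * t)) ∧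
      (∀ i j, phatinf j - phatinf i = Cstar.mulVec (p j - p i)) ∧
      (Cstarᵀ * Cstar = 1 →
        ∀ i j, euclEnorm (phatinf j - phatinf i) = euclEnorm (p j - p i)) := by
  obtain ⟨r, hr⟩ := hroot
  choose α c hc lam hlam hconv using
    exists_abs_estimate_sub_le_exp (p := p) hl hr hku hkw hlw hest hode
  obtain ⟨c', hc', lam', hlam', hunif⟩ := exists_forall_mul_exp_le hc hlam
  have hrel : ∀ i j, (Cstar *ᵥ p j + α) - (Cstar *ᵥ p i + α) = Cstar *ᵥ (p j - p i) :=
    fun i j => by rw [mulVec_sub, add_sub_add_right_eq_sub]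
  refine ⟨fun i => Cstar *ᵥ p i + α, √3 * c', by positivity, lam', hlam', fun i t ht => ?_, hrel,
    fun hCstar i j => by rw [hrel, euclEnorm_mulVec_of_transpose_mul_self hCstar]⟩
  have h := euclEnorm_le_sqrt_card_mul (v := phat i t - (Cstar *ᵥ p i + α))
    (b := c' * Real.exp (-lam' * t)) (by positivity) fun k => by
      simpa only [Pi.sub_apply, Pi.add_apply, sub_add_eq_sub_sub] using
        (hconv k t ht i).trans (hunif k t ht)
  rwa [Fintype.card_fin, Nat.cast_ofNat, ← mul_assoc] at h

/-- under the position estimation law with exponentially convergent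
orientation estimates, the position estimates converge exponentially to points whose
relative positions are the true relative positions rotated by `C*`; in particular the
inter-agent distances are recovered whenever `C*` is orthogonal. -/
theorem network_localization_convergence
    (N : ℕ)
    (p : Fin N → Fin 3 → ℝ)
    (C : Fin N → Matrix (Fin 3) (Fin 3) ℝ)
    (hC : ∀ i, (C i)ᵀ * C i = 1) (hCdet : ∀ i, (C i).det = 1)
    (l : Fin N → Fin N → ℝ) (hl : ∀ i j, 0 ≤ l i j)
    (hroot : hasRootedOutBranch l)
    (ku : ℝ) (hku : 0 < ku)
    (Chat : Fin N → ℝ → Matrix (Fin 3) (Fin 3) ℝ)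
    (Cstar : Matrix (Fin 3) (Fin 3) ℝ)
    (kw lw : ℝ) (hkw : 0 < kw) (hlw : 0 < lw)
    (hest : ∀ i, ∀ t : ℝ, 0 ≤ t →
      mnorm ((Chat i t)ᵀ * C i - Cstar) ≤ kw * Real.exp (-lw * t))
    (phat : Fin N → ℝ → Fin 3 → ℝ)
    (hode : ∀ i, ∀ t : ℝ, 0 ≤ t →
      HasDerivAt (phat i)
        (ku • ∑ j ∈ Finset.univ.filter (fun j => 0 < l i j),
          l i j • (phat j t - phat i t
            - ((Chat i t)ᵀ).mulVec ((C i).mulVec (p j - p i)))) t) :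
    ∃ phatinf : Fin N → Fin 3 → ℝ, ∃ c > (0 : ℝ), ∃ lam > (0 : ℝ),
      (∀ i, ∀ t : ℝ, 0 ≤ t → euclEnorm (phat i t - phatinf i) ≤ c * Real.exp (-lam * t)) ∧
      (∀ i j, phatinf j - phatinf i = Cstar.mulVec (p j - p i)) ∧
      (Cstarᵀ * Cstar = 1 →
        ∀ i j, euclEnorm (phatinf j - phatinf i) = euclEnorm (p j - p i)) :=
  network_localization_convergence_general N p C l hl hroot ku hku Chat Cstar kw lw hkw hlw hest
    phat hode
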